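/- For every ε > 0 and every o ∈ ℝ, the supremum over u ∈ [0, 1] of o·u − ε·(u·ln u + (1 − u)·ln(1 − u)) (with the convention 0·ln 0 = 0) equals ε·ln(e^{o/ε} + 1), i.e. the biconjugate M_ε** coincides with M_ε. -/

import Mathlib

/-!
The supremum is attained at the logistic point `u = σ(o/ε) = e^{o/ε}/(e^{o/ε} + 1)`, where a direct
computation gives `ε·ln(e^{o/ε} + 1)`. That no other `u` does better is the nonnegativity of the
Kullback–Leibler divergence between the Bernoulli laws `(u, 1 - u)` and `(σ, 1 - σ)`, which follows
termwise from `ln x ≤ x - 1`.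
-/

open Real Set

lemma mul_log_le_mul_log_add_sub {u a : ℝ} (hu : 0 ≤ u) (ha : 0 < a) :
    u * log a ≤ u * log u + (a - u) := by
  rcases hu.eq_or_lt with rfl | hu
  · simpa using ha.le
  have h := log_le_sub_one_of_pos (div_pos ha hu)
  rw [log_div ha.ne' hu.ne'] at h
  have := mul_le_mul_of_nonneg_left h hu.le
  rw [mul_sub, mul_sub, mul_div_cancel₀ _ hu.ne'] at this
  linarith

namespace Real

lemma sigmoid_eq_exp_div (t : ℝ) : sigmoid t = exp t / (exp t + 1) := by
  rw [sigmoid_def, exp_neg]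
  field_simp

lemma one_sub_sigmoid_eq_inv (t : ℝ) : 1 - sigmoid t = (exp t + 1)⁻¹ := by
  rw [sigmoid_eq_exp_div]
  field_simp
  ring

lemma log_sigmoid (t : ℝ) : log (sigmoid t) = t - log (exp t + 1) := by
  rw [sigmoid_eq_exp_div, log_div (exp_pos t).ne' (by positivity), log_exp]

lemma log_one_sub_sigmoid (t : ℝ) : log (1 - sigmoid t) = -log (exp t + 1) := by
  rw [one_sub_sigmoid_eq_inv, log_inv]

lemma mul_sub_negEntropy_le_log_exp_add_one (t : ℝ) {u : ℝ} (hu : u ∈ Icc (0 : ℝ) 1) :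
    t * u - (u * log u + (1 - u) * log (1 - u)) ≤ log (exp t + 1) := by
  have h₁ := mul_log_le_mul_log_add_sub hu.1 (sigmoid_pos t)
  have h₂ := mul_log_le_mul_log_add_sub (sub_nonneg.2 hu.2) (sub_pos.2 (sigmoid_lt_one t))
  rw [log_sigmoid] at h₁
  rw [log_one_sub_sigmoid] at h₂
  linarith

lemma mul_sigmoid_sub_negEntropy (t : ℝ) :
    t * sigmoid t - (sigmoid t * log (sigmoid t) + (1 - sigmoid t) * log (1 - sigmoid t)) =
      log (exp t + 1) := by
  rw [log_sigmoid, log_one_sub_sigmoid]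
  ring

end Real

/-- For every `ε > 0` and `o ∈ ℝ`, the supremum over `u ∈ [0,1]` of
`o·u − ε·(u·ln u + (1 − u)·ln(1 − u))` (convention `0·ln 0 = 0`) equals
`ε·ln(e^{o/ε} + 1)`: the biconjugate `M_ε**` coincides with `M_ε`. -/
theorem biconjugate_logSumExp (ε o : ℝ) (hε : 0 < ε) :
    IsLUB
      ((fun u : ℝ => o * u - ε * (u * Real.log u + (1 - u) * Real.log (1 - u))) ''
        Set.Icc (0 : ℝ) 1)
      (ε * Real.log (Real.exp (o / ε) + 1)) := by
  have scale (u : ℝ) : o * u - ε * (u * log u + (1 - u) * log (1 - u)) =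
      ε * (o / ε * u - (u * log u + (1 - u) * log (1 - u))) := by
    field_simp
  refine IsGreatest.isLUB ⟨⟨sigmoid (o / ε), ⟨sigmoid_nonneg _, sigmoid_le_one _⟩, ?_⟩, ?_⟩
  · dsimp only
    rw [scale, mul_sigmoid_sub_negEntropy]
  · rintro _ ⟨u, hu, rfl⟩
    dsimp only
    rw [scale]
    exact mul_le_mul_of_nonneg_left (mul_sub_negEntropy_le_log_exp_add_one _ hu) hε.le
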